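/- For every x > 0, -e^{-x} ln(1 + 1/x) < Ei(-x) < -(e^{-x}/2) ln(1 + 2/x). -/

import Mathlib

open MeasureTheory Real

/-- The exponential integral: for `z < 0`, `Ei z = -∫_{-z}^∞ e^{-t}/t dt`. -/
noncomputable def Ei (z : ℝ) : ℝ := -∫ t in Set.Ioi (-z), Real.exp (-t) / t

/-!
Write `E₁ x = ∫_x^∞ e^{-t}/t dt = -Ei(-x)`. Both bounds are functions of the form
`B(x) = e^{-x} log(1 + c/x) / c` (with `c = 1` and `c = 2`) which, like `E₁`, tend to `0`
at `∞`. Hence it suffices to compare derivatives: `E₁' = -e^{-x}/x`, and the derivative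
inequalities reduce to the elementary bounds `1/(x+1) < log(1 + 1/x)` and
`log z < (z - z⁻¹)/2` for `z > 1`.
-/

open Set Filter Topology

theorem hasDerivAt_setIntegral_Ioi {E : Type*} [NormedAddCommGroup E] [NormedSpace ℝ E]
    [CompleteSpace E] {f : ℝ → E} {a x : ℝ} (hf : IntegrableOn f (Ioi a)) (hax : a < x)
    (hfx : ContinuousAt f x) :
    HasDerivAt (fun y => ∫ t in Ioi y, f t) (-f x) x := by
  have hderiv : HasDerivAt (fun y => (∫ t in Ioi a, f t) - ∫ t in a..y, f t) (-f x) x := by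
    refine (intervalIntegral.integral_hasDerivAt_right ?_
      ⟨Ioi a, Ioi_mem_nhds hax, hf.aestronglyMeasurable⟩ hfx).const_sub _
    exact (intervalIntegrable_iff_integrableOn_Ioc_of_le hax.le).2
      (hf.mono_set Ioc_subset_Ioi_self)
  refine hderiv.congr_of_eventuallyEq ?_
  filter_upwards [Ioi_mem_nhds hax] with y hy
  rw [← intervalIntegral.integral_Ioi_sub_Ioi hf (le_of_lt hy), sub_sub_cancel]

theorem lt_of_hasDerivAt_lt_of_tendsto_atTop {f g f' g' : ℝ → ℝ} {a l x : ℝ}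
    (hf : ∀ y, a < y → HasDerivAt f (f' y) y) (hg : ∀ y, a < y → HasDerivAt g (g' y) y)
    (hf'g' : ∀ y, a < y → f' y < g' y) (hfl : Tendsto f atTop (𝓝 l))
    (hgl : Tendsto g atTop (𝓝 l)) (hx : a < x) : g x < f x := by
  have hderiv : ∀ y, a < y → HasDerivAt (f - g) (f' y - g' y) y :=
    fun y hy => (hf y hy).sub (hg y hy)
  have hanti : StrictAntiOn (f - g) (Ioi a) := by
    refine strictAntiOn_of_hasDerivWithinAt_neg (convex_Ioi a)
      (fun y hy => (hderiv y hy).continuousAt.continuousWithinAt) (fun y hy => ?_)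
      (fun y hy => sub_neg.2 (hf'g' y (interior_subset hy)))
    exact (hderiv y (interior_subset hy)).hasDerivWithinAt
  have hlim : Tendsto (f - g) atTop (𝓝 0) := by rw [← sub_self l]; exact hfl.sub hgl
  have hnonneg : 0 ≤ (f - g) (x + 1) := by
    refine le_of_tendsto hlim ?_
    filter_upwards [eventually_ge_atTop (x + 1)] with z hz
    exact hanti.antitoneOn (mem_Ioi.2 (by linarith)) (mem_Ioi.2 (by linarith)) hz
  have hstep : (f - g) (x + 1) < (f - g) x := hanti hx (mem_Ioi.2 (by linarith)) (by linarith)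
  simp only [Pi.sub_apply] at hnonneg hstep
  linarith

noncomputable def expIntegralE₁ (x : ℝ) : ℝ := ∫ t in Ioi x, exp (-t) / t

theorem Ei_neg (x : ℝ) : Ei (-x) = -expIntegralE₁ x := by
  rw [Ei, neg_neg, expIntegralE₁]

theorem integrableOn_exp_neg_div_Ioi {a : ℝ} (ha : 0 < a) :
    IntegrableOn (fun t => exp (-t) / t) (Ioi a) := by
  simp_rw [div_eq_mul_inv]
  refine (integrableOn_exp_neg_Ioi a).mul_bdd (c := a⁻¹) measurable_inv.aestronglyMeasurable ?_
  filter_upwards [ae_restrict_mem measurableSet_Ioi] with t (ht : a < t)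
  rw [norm_inv, norm_of_nonneg (ha.trans ht).le]
  exact inv_anti₀ ha ht.le

theorem hasDerivAt_expIntegralE₁ {x : ℝ} (hx : 0 < x) :
    HasDerivAt expIntegralE₁ (-(exp (-x) / x)) x :=
  hasDerivAt_setIntegral_Ioi (integrableOn_exp_neg_div_Ioi (half_pos hx)) (half_lt_self hx)
    ((continuous_exp.comp continuous_neg).continuousAt.div continuousAt_id hx.ne')

theorem tendsto_expIntegralE₁_atTop : Tendsto expIntegralE₁ atTop (𝓝 0) :=
  tendsto_integral_Ioi_zero tendsto_id

theorem hasDerivAt_exp_neg_mul_log_one_add_div {c y : ℝ} (hy : y ≠ 0) (hyc : y + c ≠ 0) :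
    HasDerivAt (fun y => exp (-y) * log (1 + c / y))
      (-exp (-y) * (log (1 + c / y) + c / (y * (y + c)))) y := by
  have hquot : HasDerivAt (fun y => 1 + c / y) (-c / y ^ 2) y := by
    simpa [div_eq_mul_inv] using ((hasDerivAt_inv hy).const_mul c).const_add 1
  have hpos : 1 + c / y ≠ 0 := by
    rw [one_add_div hy]; exact div_ne_zero hyc hy
  refine ((hasDerivAt_neg y).exp.mul (hquot.log hpos)).congr_deriv ?_
  field_simp
  ring

theorem tendsto_exp_neg_mul_log_one_add_div_atTop (c : ℝ) :
    Tendsto (fun y => exp (-y) * log (1 + c / y)) atTop (𝓝 0) := by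
  have hlog : Tendsto (fun y => log (1 + c / y)) atTop (𝓝 0) := by
    simpa using ((tendsto_const_nhds.div_atTop tendsto_id).const_add 1).log (by norm_num)
  simpa using tendsto_exp_neg_atTop_nhds_zero.mul hlog

theorem one_div_add_one_lt_log_one_add_one_div {y : ℝ} (hy : 0 < y) :
    1 / (y + 1) < log (1 + 1 / y) := by
  have h := log_lt_sub_one_of_pos (x := y / (y + 1)) (by positivity) (by
    rw [ne_eq, div_eq_one_iff_eq (by positivity)]; linarith)
  have hlog : log (y / (y + 1)) = -log (1 + 1 / y) := by
    rw [← log_inv]; congr 1; field_simp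
  have hsub : y / (y + 1) - 1 = -(1 / (y + 1)) := by field_simp; ring
  linarith

theorem log_lt_sub_inv_div_two {z : ℝ} (hz : 1 < z) : log z < (z - z⁻¹) / 2 := by
  rw [← sinh_log (by linarith)]
  exact self_lt_sinh_iff.2 (log_pos hz)

theorem exp_neg_div_lt_exp_neg_mul_log_one_add_one_div_add {y : ℝ} (hy : 0 < y) :
    exp (-y) / y < exp (-y) * (log (1 + 1 / y) + 1 / (y * (y + 1))) := by
  have hlog := one_div_add_one_lt_log_one_add_one_div hy
  have hsplit : 1 / y = 1 / (y + 1) + 1 / (y * (y + 1)) := by field_simp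
  rw [div_eq_mul_one_div]
  exact mul_lt_mul_of_pos_left (by linarith) (exp_pos _)

theorem exp_neg_mul_log_one_add_two_div_add_div_two_lt {y : ℝ} (hy : 0 < y) :
    exp (-y) * (log (1 + 2 / y) + 2 / (y * (y + 2))) / 2 < exp (-y) / y := by
  have hlog := log_lt_sub_inv_div_two (z := 1 + 2 / y) (lt_add_of_pos_right 1 (by positivity))
  have hsplit : (1 + 2 / y - (1 + 2 / y)⁻¹) / 4 + 2 / (y * (y + 2)) / 2 = 1 / y := by
    field_simp; ring
  rw [mul_div_assoc, div_eq_mul_one_div (exp _)]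
  exact mul_lt_mul_of_pos_left (by linarith) (exp_pos _)

/-- For every `x > 0`, `-e^{-x} ln(1 + 1/x) < Ei(-x) < -(e^{-x}/2) ln(1 + 2/x)`. -/
theorem Ei_neg_bounds (x : ℝ) (hx : 0 < x) :
    -Real.exp (-x) * Real.log (1 + 1 / x) < Ei (-x) ∧
      Ei (-x) < -(Real.exp (-x) / 2) * Real.log (1 + 2 / x) := by
  have hE₁ : ∀ y, 0 < y → HasDerivAt expIntegralE₁ (-(exp (-y) / y)) y :=
    fun _ => hasDerivAt_expIntegralE₁
  have hB : ∀ c, 0 < c → ∀ y, 0 < y → HasDerivAt (fun y => exp (-y) * log (1 + c / y))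
      (-exp (-y) * (log (1 + c / y) + c / (y * (y + c)))) y :=
    fun c hc y hy => hasDerivAt_exp_neg_mul_log_one_add_div hy.ne' (by positivity)
  have upper : expIntegralE₁ x < exp (-x) * log (1 + 1 / x) :=
    lt_of_hasDerivAt_lt_of_tendsto_atTop (hB 1 one_pos) hE₁
      (fun y hy => by linarith [exp_neg_div_lt_exp_neg_mul_log_one_add_one_div_add hy])
      (tendsto_exp_neg_mul_log_one_add_div_atTop 1) tendsto_expIntegralE₁_atTop hx
  have lower : exp (-x) * log (1 + 2 / x) / 2 < expIntegralE₁ x :=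
    lt_of_hasDerivAt_lt_of_tendsto_atTop hE₁ (fun y hy => (hB 2 two_pos y hy).div_const 2)
      (fun y hy => by linarith [exp_neg_mul_log_one_add_two_div_add_div_two_lt hy])
      tendsto_expIntegralE₁_atTop
      (by simpa using (tendsto_exp_neg_mul_log_one_add_div_atTop 2).div_const 2) hx
  rw [Ei_neg]
  constructor <;> linarith
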